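/- On designs, the observational preorder decomposes: if phi1 ⊑ phi2, then there exists phi with phi1 ≤L phi ≤R phi2, where ≤R is derivability without the axiom phi ⊑ daimon and ≤L is derivability without the axiom Omega ⊑ phi. -/

import Mathlib

/-! Designs of ludics, as (possibly infinitely branching) trees of alternating
positive actions `(+, ξ, I)` and negative actions `(-, ζ, J)`, with leaves
`Ω` (the partial design) and the daimon `✠`. Addresses (loci) are lists of
natural numbers (biases). -/

mutual
  inductive PosDesign : Type
    | omega : PosDesign
    | daimon : PosDesign
    | pos : List ℕ → Finset ℕ → (ℕ → NegDesign) → PosDesign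
  inductive NegDesign : Type
    | neg : (Finset ℕ → PosDesign) → NegDesign
end

def NegDesign.app : NegDesign → Finset ℕ → PosDesign
  | .neg f, J => f J

/-! The order `⊑` on designs, generated by `Ω ⊑ φ`, `φ ⊑ ✠`, congruence,
reflexivity and transitivity.  The two boolean parameters state whether the
axiom `Ω ⊑ φ` (resp. `φ ⊑ ✠`) is allowed: `LeP true true` is the observational
order `⊑`, `LeP false true` is `≤L`, and `LeP true false` is `≤R` (the stable
order). -/

mutual
  inductive LeP (o d : Bool) : PosDesign → PosDesign → Prop
    | omega (φ : PosDesign) (h : o = true) : LeP o d .omega φ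
    | daimon (φ : PosDesign) (h : d = true) : LeP o d φ .daimon
    | refl (φ : PosDesign) : LeP o d φ φ
    | trans {φ₁ φ₂ φ₃ : PosDesign} :
        LeP o d φ₁ φ₂ → LeP o d φ₂ φ₃ → LeP o d φ₁ φ₃
    | pos (ξ : List ℕ) (I : Finset ℕ) (k k' : ℕ → NegDesign)
        (h : ∀ i ∈ I, LeN o d (k i) (k' i)) : LeP o d (.pos ξ I k) (.pos ξ I k')
  inductive LeN (o d : Bool) : NegDesign → NegDesign → Prop
    | neg (f f' : Finset ℕ → PosDesign)
        (h : ∀ J, LeP o d (f J) (f' J)) : LeN o d (.neg f) (.neg f')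
end

/-! Reflexivity and transitivity are admissible in the calculus `LeNF`, where a
congruence rule crosses a positive action together with the negative layer under it. In that
calculus a derivation of `φ₁ ⊑ φ₂` is a tree whose leaves are instances of `Ω ⊑ φ` or
`φ ⊑ ✠`, so the interpolant is built by structural induction: `Ω ≤L Ω ≤R φ` at the first
kind of leaf, `φ ≤L ✠ ≤R ✠` at the second, and componentwise at a positive action. -/

inductive LeNF (o d : Bool) : PosDesign → PosDesign → Prop
  | omega (φ : PosDesign) (h : o = true) : LeNF o d .omega φ
  | daimon (φ : PosDesign) (h : d = true) : LeNF o d φ .daimon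
  | omega_refl : LeNF o d .omega .omega
  | daimon_refl : LeNF o d .daimon .daimon
  | pos (ξ : List ℕ) (I : Finset ℕ) (k k' : ℕ → NegDesign)
      (h : ∀ i ∈ I, ∀ J, LeNF o d ((k i).app J) ((k' i).app J)) :
      LeNF o d (.pos ξ I k) (.pos ξ I k')

namespace LeNF

variable {o d : Bool}

mutual
  theorem refl : ∀ φ, LeNF o d φ φ
    | .omega => omega_refl
    | .daimon => daimon_refl
    | .pos ξ I k => pos ξ I k k fun i _ J => app_refl (k i) J
  theorem app_refl : ∀ (n : NegDesign) J, LeNF o d (n.app J) (n.app J)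
    | .neg f, J => refl (f J)
end

theorem trans {φ₁ φ₂ φ₃ : PosDesign} (h₁₂ : LeNF o d φ₁ φ₂) (h₂₃ : LeNF o d φ₂ φ₃) :
    LeNF o d φ₁ φ₃ := by
  induction h₁₂ generalizing φ₃ with
  | omega _ ho => exact omega _ ho
  | daimon _ hd =>
    cases h₂₃ with
    | daimon _ hd' => exact daimon _ hd'
    | daimon_refl => exact daimon _ hd
  | omega_refl | daimon_refl => exact h₂₃
  | pos ξ I k k' _ ih =>
    cases h₂₃ with
    | daimon _ hd => exact daimon _ hd
    | pos _ _ _ k'' h' => exact pos ξ I k k'' fun i hi J => ih i hi J (h' i hi J)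

theorem decompose {φ₁ φ₂ : PosDesign} (h : LeNF true true φ₁ φ₂) :
    ∃ φ, LeNF false true φ₁ φ ∧ LeNF true false φ φ₂ := by
  induction h with
  | omega φ _ => exact ⟨.omega, omega_refl, omega φ rfl⟩
  | daimon φ _ => exact ⟨.daimon, daimon φ rfl, daimon_refl⟩
  | omega_refl => exact ⟨.omega, omega_refl, omega_refl⟩
  | daimon_refl => exact ⟨.daimon, daimon_refl, daimon_refl⟩
  | pos ξ I k k' _ ih =>
    classical
    choose ψ hψL hψR using ih
    -- outside `I` the branches are irrelevant to both orders; any choice will do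
    let m : ℕ → NegDesign := fun i =>
      .neg fun J => if hi : i ∈ I then ψ i hi J else (k i).app J
    refine ⟨.pos ξ I m, pos ξ I k m fun i hi J => ?_, pos ξ I m k' fun i hi J => ?_⟩
    · simpa only [m, NegDesign.app, dif_pos hi] using hψL i hi J
    · simpa only [m, NegDesign.app, dif_pos hi] using hψR i hi J

end LeNF

theorem LeN.of_app {o d : Bool} :
    ∀ {n n' : NegDesign}, (∀ J, LeP o d (n.app J) (n'.app J)) → LeN o d n n'
  | .neg f, .neg f', h => .neg f f' h

theorem LeP.toLeNF {o d : Bool} {φ₁ φ₂ : PosDesign} (h : LeP o d φ₁ φ₂) :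
    LeNF o d φ₁ φ₂ := by
  induction h using LeP.rec
    (motive_2 := fun n n' _ => ∀ J, LeNF o d (n.app J) (n'.app J)) with
  | omega φ ho => exact .omega φ ho
  | daimon φ hd => exact .daimon φ hd
  | refl φ => exact .refl φ
  | trans _ _ ih₁₂ ih₂₃ => exact ih₁₂.trans ih₂₃
  | pos ξ I k k' _ ih => exact .pos ξ I k k' ih
  | neg _ _ _ ih => exact ih _

theorem LeNF.toLeP {o d : Bool} {φ₁ φ₂ : PosDesign} (h : LeNF o d φ₁ φ₂) :
    LeP o d φ₁ φ₂ := by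
  induction h with
  | omega φ ho => exact .omega φ ho
  | daimon φ hd => exact .daimon φ hd
  | omega_refl | daimon_refl => exact .refl _
  | pos ξ I k k' _ ih => exact .pos ξ I k k' fun i hi => LeN.of_app (ih i hi)

/-- decomposition of the observational order on designs: if
`φ₁ ⊑ φ₂` then there is a design `φ` with `φ₁ ≤L φ ≤R φ₂`. -/
theorem observational_order_decomposition (φ₁ φ₂ : PosDesign)
    (h : LeP true true φ₁ φ₂) :
    ∃ φ, LeP false true φ₁ φ ∧ LeP true false φ φ₂ := by
  obtain ⟨φ, h₁, h₂⟩ := h.toLeNF.decompose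
  exact ⟨φ, h₁.toLeP, h₂.toLeP⟩
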